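/- Let 𝔳 = {ν_i}_{i∈I} be a totally ordered set in V with no maximal element such that at least one polynomial is not 𝔳-stable. Let Q be a monic polynomial of smallest degree that is not 𝔳-stable, take γ ∈ Γ ∪ {∞} with γ > ν_i(Q) for every i ∈ I, and let μ be the valuation defined by μ(f_0 + f_1 Q + … + f_r Q^r) = min_{0≤j≤r} {𝔳(f_j) + jγ} on Q-expansions. Fix i ∈ I and f ∈ K[x]. Then ν_i(f) = μ(f) if and only if ν_i(f) = ν_j(f) for every j ≥ i; in particular, ν_i(f) = μ(f) implies that f is 𝔳-stable. -/

import Mathlib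

open Polynomial

/-- An additive valuation (possibly with nontrivial support) on a commutative
ring `R`, with values in `Γ ∪ {∞}`. -/
structure ValOn (R : Type*) [CommRing R] (Γ : Type*) [AddCommGroup Γ] [LinearOrder Γ] [IsOrderedAddMonoid Γ] where
  v : R → WithTop Γ
  v_zero : v 0 = ⊤
  v_one : v 1 = 0
  v_mul : ∀ a b, v (a * b) = v a + v b
  min_le_v_add : ∀ a b, min (v a) (v b) ≤ v (a + b)

namespace ValOn

variable {R : Type*} [CommRing R] {Γ : Type*} [AddCommGroup Γ] [LinearOrder Γ] [IsOrderedAddMonoid Γ]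

theorem v_neg (w : ValOn R Γ) (a : R) : w.v (-a) = w.v a := by
  have h1 : w.v (-1) + w.v (-1) = 0 := by
    rw [← w.v_mul]; norm_num [w.v_one]
  have h2 : w.v (-1) = 0 := by
    cases hx : w.v (-1) with
    | top => rw [hx] at h1; simp at h1
    | coe x =>
        rw [hx, ← WithTop.coe_add, ← WithTop.coe_zero, WithTop.coe_inj] at h1
        have hx0 : x = 0 := by
          rcases lt_trichotomy x 0 with hc | hc | hc
          · exact absurd h1 (ne_of_lt (add_neg hc hc))
          · exact hc
          · exact absurd h1 (ne_of_gt (add_pos hc hc))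
        rw [hx0, WithTop.coe_zero]
  calc w.v (-a) = w.v (-1 * a) := by rw [neg_one_mul]
  _ = w.v a := by rw [w.v_mul, h2, zero_add]

theorem le_v_sum (w : ValOn R Γ) {α : Type*} {γ : WithTop Γ} (s : Finset α) (h : α → R)
    (H : ∀ t ∈ s, γ ≤ w.v (h t)) : γ ≤ w.v (∑ t ∈ s, h t) := by
  classical
  induction s using Finset.induction_on with
  | empty => simp [w.v_zero]
  | insert _ _ hx ih =>
      rw [Finset.sum_insert hx]
      refine le_trans ?_ (w.min_le_v_add _ _)
      rw [le_min_iff]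
      exact ⟨H _ (Finset.mem_insert_self _ _),
        ih fun t ht => H t (Finset.mem_insert_of_mem ht)⟩

theorem lt_v_sum (w : ValOn R Γ) {α : Type*} {γ : WithTop Γ} (hγ : γ ≠ ⊤) (s : Finset α)
    (h : α → R) (H : ∀ t ∈ s, γ < w.v (h t)) : γ < w.v (∑ t ∈ s, h t) := by
  classical
  induction s using Finset.induction_on with
  | empty => simp [w.v_zero]; exact lt_top_iff_ne_top.mpr hγ
  | insert _ _ hx ih =>
      rw [Finset.sum_insert hx]
      refine lt_of_lt_of_le ?_ (w.min_le_v_add _ _)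
      rw [lt_min_iff]
      exact ⟨H _ (Finset.mem_insert_self _ _),
        ih fun t ht => H t (Finset.mem_insert_of_mem ht)⟩

/-- The subring `⊕_{γ ∈ Γ} P_γ` of the monoid algebra `R[Γ]`, where
`P_γ = {f : γ ≤ v f}`.  The graded ring `G_v = ⊕_γ P_γ/P_γ⁺` is realized below as the
quotient of this subring by the ideal `⊕_γ P_γ⁺`. -/
def gradedCarrier (w : ValOn R Γ) : Subring (AddMonoidAlgebra R Γ) where
  carrier := {s | ∀ γ : Γ, (γ : WithTop Γ) ≤ w.v (s.coeff γ)}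
  zero_mem' := by intro γ; simp [w.v_zero]
  one_mem' := by
    intro γ
    classical
    show (γ : WithTop Γ) ≤ w.v ((AddMonoidAlgebra.single (0:Γ) (1:R)).coeff γ)
    rw [AddMonoidAlgebra.coeff_single, Finsupp.single_apply]
    split_ifs with h
    · subst h; simp [w.v_one]
    · simp [w.v_zero]
  add_mem' := by
    intro a b ha hb γ
    show (γ : WithTop Γ) ≤ w.v (a.coeff γ + b.coeff γ)
    refine le_trans ?_ (w.min_le_v_add _ _)
    exact le_min (ha γ) (hb γ)
  neg_mem' := by
    intro a ha γ
    show (γ : WithTop Γ) ≤ w.v ((-a).coeff γ)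
    rw [AddMonoidAlgebra.coeff_neg, Finsupp.neg_apply, w.v_neg]
    exact ha γ
  mul_mem' := by
    classical
    intro a b ha hb γ
    rw [AddMonoidAlgebra.coeff_mul]
    rw [Finsupp.sum]
    refine w.le_v_sum _ _ (fun α hα => ?_)
    rw [Finsupp.sum]
    refine w.le_v_sum _ _ (fun β hβ => ?_)
    split_ifs with h
    · subst h
      rw [w.v_mul, WithTop.coe_add]
      exact add_le_add (ha α) (hb β)
    · simp [w.v_zero]

/-- The ideal `⊕_{γ ∈ Γ} P_γ⁺` of `gradedCarrier w`. -/
def gradedIdeal (w : ValOn R Γ) : Ideal (gradedCarrier w) where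
  carrier := {s | ∀ γ : Γ, (γ : WithTop Γ) < w.v ((s : AddMonoidAlgebra R Γ).coeff γ)}
  zero_mem' := by intro γ; simp [w.v_zero]
  add_mem' := by
    intro a b ha hb γ
    show (γ : WithTop Γ) < w.v ((a : AddMonoidAlgebra R Γ).coeff γ + (b : AddMonoidAlgebra R Γ).coeff γ)
    refine lt_of_lt_of_le ?_ (w.min_le_v_add _ _)
    exact lt_min (ha γ) (hb γ)
  smul_mem' := by
    classical
    intro c x hx γ
    rw [smul_eq_mul]
    show (γ : WithTop Γ) < w.v (((c : AddMonoidAlgebra R Γ) * (x : AddMonoidAlgebra R Γ)).coeff γ)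
    rw [AddMonoidAlgebra.coeff_mul, Finsupp.sum]
    refine w.lt_v_sum (WithTop.coe_ne_top) _ _ (fun α hα => ?_)
    rw [Finsupp.sum]
    refine w.lt_v_sum (WithTop.coe_ne_top) _ _ (fun β hβ => ?_)
    split_ifs with h
    · subst h
      rw [w.v_mul, WithTop.coe_add]
      exact WithTop.add_lt_add_of_le_of_lt WithTop.coe_ne_top (c.2 α) (hx β)
    · simp [w.v_zero]
end ValOn

/-- The graded ring `G_w = ⊕_{γ} P_γ/P_γ⁺` associated to the valuation `w`,
realized as a quotient. -/
abbrev Graded {R : Type*} [CommRing R] {Γ : Type*} [AddCommGroup Γ] [LinearOrder Γ] [IsOrderedAddMonoid Γ]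
    (w : ValOn R Γ) : Type _ :=
  (ValOn.gradedCarrier w) ⧸ (ValOn.gradedIdeal w)

namespace ValOn

variable {R : Type*} [CommRing R] {Γ : Type*} [AddCommGroup Γ] [LinearOrder Γ] [IsOrderedAddMonoid Γ]

/-- `inv_w f`, the initial form (image of `f` in the homogeneous component
`P_{v f}/P_{v f}⁺` of the graded ring), with `inv_w f = 0` when `f ∈ supp w`. -/
noncomputable def initialForm (w : ValOn R Γ) (f : R) : Graded w :=
  if h : w.v f = ⊤ then 0
  else Ideal.Quotient.mk (gradedIdeal w)
    ⟨AddMonoidAlgebra.single ((w.v f).untop h) f, by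
      intro γ
      classical
      show (γ : WithTop Γ) ≤ w.v ((AddMonoidAlgebra.single ((w.v f).untop h) f).coeff γ)
      rw [AddMonoidAlgebra.coeff_single, Finsupp.single_apply]
      split_ifs with hh
      · rw [← hh, WithTop.coe_untop]
      · simp [w.v_zero]⟩

theorem gradedCarrier_mono {w₁ w₂ : ValOn R Γ} (h : ∀ f, w₁.v f ≤ w₂.v f) :
    gradedCarrier w₁ ≤ gradedCarrier w₂ :=
  fun s hs γ => (hs γ).trans (h _)

/-- The homomorphism `φ : G_{w₁} → G_{w₂}` of graded rings, for `w₁ ≤ w₂`: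
it sends `inv_{w₁} f` to `inv_{w₂} f` if `w₁ f = w₂ f` and to `0` if `w₁ f < w₂ f`. -/
noncomputable def phi (w₁ w₂ : ValOn R Γ) (h : ∀ f, w₁.v f ≤ w₂.v f) :
    Graded w₁ →+* Graded w₂ :=
  Ideal.Quotient.lift (gradedIdeal w₁)
    ((Ideal.Quotient.mk (gradedIdeal w₂)).comp (Subring.inclusion (gradedCarrier_mono h)))
    (by
      intro a ha
      rw [RingHom.comp_apply, Ideal.Quotient.eq_zero_iff_mem]
      exact fun γ => lt_of_lt_of_le (ha γ) (h _))

end ValOn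


open ValOn

section PolyDefs

variable {K : Type*} [Field K] {Γ : Type*} [AddCommGroup Γ] [LinearOrder Γ] [IsOrderedAddMonoid Γ]

/-- A polynomial `f` is `𝔳`-stable for a family `𝔳 = (ν_i)_{i ∈ I}` if the values `ν_i(f)`
eventually stabilize. -/
def Stable {I : Type*} [Preorder I] (ν : I → ValOn (Polynomial K) Γ) (f : Polynomial K) : Prop :=
  ∃ i : I, ∀ j : I, i ≤ j → (ν j).v f = (ν i).v f

/-- The truncation `w_q` of `w` at `q`:
`w_q(f) = min_j w(f_j q^j)` where `f = ∑ f_j q^j` is the `q`-expansion of `f`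
(for monic non-constant `q`, the `j`-th coefficient of the `q`-expansion is
`(f /ₘ q^j) %ₘ q`, and all the nonzero coefficients occur for `j ≤ natDegree f`). -/
noncomputable def truncVal (w : ValOn (Polynomial K) Γ) (q f : Polynomial K) : WithTop Γ :=
  (Finset.range (f.natDegree + 1)).inf' Finset.nonempty_range_add_one
    (fun j => w.v (((f /ₘ q ^ j) %ₘ q) * q ^ j))

/-- `δ(f) = max {ν̄(x - a) : a a root of f}` for a polynomial over an algebraically closed
field, with the convention `δ(f) = ⊥ = -∞` when `f` has no roots (e.g. `deg f = 0`). -/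
noncomputable def deltaOf {F : Type*} [Field F] (wbar : ValOn (Polynomial F) Γ)
    (f : Polynomial F) : WithBot (WithTop Γ) :=
  (f.roots.map (fun a => ((wbar.v (X - C a) : WithTop Γ) : WithBot (WithTop Γ)))).sup

/-- `δ(f)` of `f ∈ K[x]`, computed via the fixed extension `ν̄` of `ν` to `K̄[x]`. -/
noncomputable def delta (wbar : ValOn (Polynomial (AlgebraicClosure K)) Γ)
    (f : Polynomial K) : WithBot (WithTop Γ) :=
  deltaOf wbar (f.map (algebraMap K (AlgebraicClosure K)))

/-- `Q` is a key polynomial (of level `δ(Q)`) for the valuation `ν` (with fixed extension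
`ν̄` to `K̄[x]`): `Q` is monic and `δ(f) ≥ δ(Q) → deg f ≥ deg Q` for every nonzero `f`. -/
def IsKeyPoly (wbar : ValOn (Polynomial (AlgebraicClosure K)) Γ) (Q : Polynomial K) : Prop :=
  Q.Monic ∧ ∀ f : Polynomial K, f ≠ 0 → delta wbar Q ≤ delta wbar f → Q.degree ≤ f.degree

/-- `Ψ_n`: the set of key polynomials of degree `n`. -/
def Psi (wbar : ValOn (Polynomial (AlgebraicClosure K)) Γ) (n : ℕ) : Set (Polynomial K) :=
  {Q | IsKeyPoly wbar Q ∧ Q.natDegree = n}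

/-- The set `K_n = {f : ν_Q(f) < ν(f) for all Q ∈ Ψ_n}`. -/
def LimitSet (w : ValOn (Polynomial K) Γ) (wbar : ValOn (Polynomial (AlgebraicClosure K)) Γ)
    (n : ℕ) : Set (Polynomial K) :=
  {f | ∀ Q ∈ Psi wbar n, truncVal w Q f < w.v f}

/-- A limit key polynomial for `Ψ_n`: a monic polynomial in `K_n` of least degree. -/
def IsLimitKeyPoly (w : ValOn (Polynomial K) Γ)
    (wbar : ValOn (Polynomial (AlgebraicClosure K)) Γ) (n : ℕ) (Qn : Polynomial K) : Prop :=
  Qn.Monic ∧ Qn ∈ LimitSet w wbar n ∧ ∀ g ∈ LimitSet w wbar n, Qn.degree ≤ g.degree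

/-- `g` is `𝔳`-stable for the family `𝔳 = (ν_Q)_{Q ∈ Ψ_n}`, ordered by `Q ⪯ Q' ↔ ν_Q ≤ ν_{Q'}`. -/
def PsiStable (w : ValOn (Polynomial K) Γ) (wbar : ValOn (Polynomial (AlgebraicClosure K)) Γ)
    (n : ℕ) (g : Polynomial K) : Prop :=
  ∃ Q ∈ Psi wbar n, ∀ Q' ∈ Psi wbar n,
    (∀ h : Polynomial K, truncVal w Q h ≤ truncVal w Q' h) → truncVal w Q' g = truncVal w Q g

/-- `v` is a Krull valuation: its support is trivial. -/
def IsKrullVal (v : Polynomial K → WithTop Γ) : Prop :=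
  ∀ f : Polynomial K, f ≠ 0 → v f ≠ ⊤

/-- The quotient group `v(K[x])/ν₀K` is a torsion group: every value of `v` has a positive
multiple lying in the value group of `ν₀`. -/
def TorsionOverBase (ν₀ : ValOn K Γ) (v : Polynomial K → WithTop Γ) : Prop :=
  ∀ f : Polynomial K, f ≠ 0 → ∃ m : ℕ, 0 < m ∧ ∃ a : K, a ≠ 0 ∧ m • v f = ν₀.v a

/-- `v` (a valuation on `K[x]` extending `ν₀`) is residue-transcendental: it is Krull and the
residue field extension `K(x)v ∣ Kν₀` is transcendental, i.e. there are `f, g` with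
`v f = v g` whose residue `res(f/g)` is transcendental over `Kν₀`: every polynomial over
`Kν₀` (with coefficients `res(c_i)`, not all zero) does not vanish at `res(f/g)`. -/
def ResidueTranscendental (ν₀ : ValOn K Γ) (v : Polynomial K → WithTop Γ) : Prop :=
  IsKrullVal v ∧ ∃ f g : Polynomial K, f ≠ 0 ∧ g ≠ 0 ∧ v f = v g ∧
    ∀ (n : ℕ) (c : ℕ → K), (∀ i, 0 ≤ ν₀.v (c i)) → (∃ i, i ≤ n ∧ ν₀.v (c i) = 0) →
      v (∑ i ∈ Finset.range (n + 1), Polynomial.C (c i) * f ^ i * g ^ (n - i)) = v (g ^ n)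

/-- `v` is value-transcendental: it is not Krull, or `v(K[x])/ν₀K` is not torsion. -/
def ValueTranscendental (ν₀ : ValOn K Γ) (v : Polynomial K → WithTop Γ) : Prop :=
  ¬ IsKrullVal v ∨ ¬ TorsionOverBase ν₀ v

/-- `v` is valuation-transcendental. -/
def ValuationTranscendental (ν₀ : ValOn K Γ) (v : Polynomial K → WithTop Γ) : Prop :=
  ValueTranscendental ν₀ v ∨ ResidueTranscendental ν₀ v

/-- `v` is valuation-algebraic. -/
def ValuationAlgebraic (ν₀ : ValOn K Γ) (v : Polynomial K → WithTop Γ) : Prop :=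
  ¬ ValuationTranscendental ν₀ v

end PolyDefs

/-!
Write `f = c₀ + Q h` with `c₀ = f %ₘ Q`. Polynomials of degree `< deg Q` are `𝔳`-stable with
limit value `μ`, and `μ (c₀ + Q h) = min (μ c₀) (γ + μ h)`. Since `ν_i Q` never stabilises,
`ν_i (Q h)` is never eventually constant and finite. Hence `ν_i ≤ μ`, by induction on the degree:
if `μ f < ν_i f`, then either `ν_j (Q h)` freezes at `μ c₀`, or
`ν_j (Q h) < γ + μ h = μ f < ν_j (f - c₀)`. And if `ν_i f < μ f ≤ μ c₀`, then `ν_j (Q h) = ν_j f`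
for all large `j`, so `ν_j f` cannot stay equal to `ν_i f`.
-/

open Filter

namespace ValOn

variable {R : Type*} [CommRing R] {Γ : Type*} [AddCommGroup Γ] [LinearOrder Γ]
  [IsOrderedAddMonoid Γ] (w : ValOn R Γ)

theorem v_add_eq_left_of_lt {a b : R} (h : w.v a < w.v b) : w.v (a + b) = w.v a := by
  refine le_antisymm ?_ (min_eq_left h.le ▸ w.min_le_v_add a b)
  by_contra! hlt
  have := w.min_le_v_add (a + b) (-b)
  rw [add_neg_cancel_right, w.v_neg] at this
  exact (lt_min hlt h).not_ge this

theorem v_sub_eq_left_of_lt {a b : R} (h : w.v a < w.v b) : w.v (a - b) = w.v a := by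
  rw [sub_eq_add_neg]
  exact w.v_add_eq_left_of_lt (by rwa [w.v_neg])

theorem v_sub_eq_right_of_lt {a b : R} (h : w.v b < w.v a) : w.v (a - b) = w.v b := by
  rw [← neg_sub, w.v_neg, w.v_sub_eq_left_of_lt h]

theorem min_le_v_sub (a b : R) : min (w.v a) (w.v b) ≤ w.v (a - b) := by
  simpa only [sub_eq_add_neg, w.v_neg] using w.min_le_v_add a (-b)

end ValOn

theorem add_mul_sum_mul_pow_eq {R : Type*} [CommSemiring R] (Q c₀ : R) (r : ℕ) (d : ℕ → R) :
    c₀ + Q * ∑ j ∈ Finset.range r, d j * Q ^ j =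
      ∑ j ∈ Finset.range (r + 1), (if j = 0 then c₀ else d (j - 1)) * Q ^ j := by
  simp only [Finset.sum_range_succ', Finset.mul_sum, Nat.add_one_ne_zero, ↓reduceIte,
    add_tsub_cancel_right, pow_succ, pow_zero, mul_one]
  rw [add_comm]
  congr 1
  exact Finset.sum_congr rfl fun j _ => by ring

theorem exists_eq_sum_mul_pow_of_monic {K : Type*} [Field K] {Q : K[X]} (hQ : Q.Monic)
    (hQpos : 0 < Q.degree) (f : K[X]) : ∃ (r : ℕ) (c : ℕ → K[X]),
      f = ∑ j ∈ Finset.range (r + 1), c j * Q ^ j ∧ ∀ j, (c j).degree < Q.degree := by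
  induction f using degree_lt_wf.induction with
  | _ f ih =>
  rcases eq_or_ne f 0 with rfl | hf
  · exact ⟨0, 0, by simp, fun _ => by simpa using (WithBot.bot_lt_coe 0).trans hQpos⟩
  obtain ⟨r, d, hd, hdeg⟩ := ih _ (degree_divByMonic_lt f Q hf hQpos)
  refine ⟨r + 1, fun j => if j = 0 then f %ₘ Q else d (j - 1), ?_, ?_⟩
  · rw [← add_mul_sum_mul_pow_eq, ← hd, modByMonic_add_div f Q]
  · rintro (_ | j)
    · simpa using degree_modByMonic_lt f hQ
    · simpa using hdeg j

theorem Finset.inf'_range_add_two {α : Type*} [LinearOrder α] (f : ℕ → α) (n : ℕ) :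
    (Finset.range (n + 2)).inf' Finset.nonempty_range_add_one f =
      min (f 0) ((Finset.range (n + 1)).inf' Finset.nonempty_range_add_one (f <| · + 1)) := by
  refine eq_of_forall_le_iff fun c => ?_
  simp [Finset.le_inf'_iff, Nat.forall_lt_succ_left']

section LimitValuation

variable {K : Type*} [Field K] {Γ : Type*} [AddCommGroup Γ] [LinearOrder Γ] [IsOrderedAddMonoid Γ]
  {I : Type*} [Preorder I] {ν : I → ValOn K[X] Γ} {Q : K[X]}

/-- `μ (∑ c_j Q^j) = min_j (𝔳(c_j) + jγ)` on expansions with `deg c_j < deg Q`, where `𝔳(c_j)`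
is the eventual value of `ν_i(c_j)`. -/
def IsLimitVal (ν : I → ValOn K[X] Γ) (Q : K[X]) (γ : WithTop Γ) (μ : ValOn K[X] Γ) : Prop :=
  ∀ (f : K[X]) (r : ℕ) (c : ℕ → K[X]), f = ∑ j ∈ Finset.range (r + 1), c j * Q ^ j →
    (∀ j, (c j).degree < Q.degree) →
    ∀ᶠ i in atTop, μ.v f = (Finset.range (r + 1)).inf' Finset.nonempty_range_add_one
      (fun j => (ν i).v (c j) + j • γ)

theorem degree_pos_of_not_stable [Nonempty I] (hQ : Q.Monic) (hns : ¬ Stable ν Q) :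
    0 < Q.degree := by
  by_contra! h
  obtain ⟨i⟩ := ‹Nonempty I›
  refine hns ⟨i, fun j _ => ?_⟩
  rw [hQ.degree_le_zero_iff_eq_one.mp h, (ν j).v_one, (ν i).v_one]

theorem not_eventually_v_mul_eq [IsDirectedOrder I] [Nonempty I]
    (hmono : ∀ i j, i ≤ j → ∀ f, (ν i).v f ≤ (ν j).v f) (hns : ¬ Stable ν Q) {h : K[X]}
    {a : WithTop Γ} (ha : a ≠ ⊤) : ¬ ∀ᶠ i in atTop, (ν i).v (Q * h) = a := by
  intro H
  obtain ⟨i, hi⟩ := H.exists_forall_of_atTop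
  obtain ⟨j, hij, hlt⟩ : ∃ j, i ≤ j ∧ (ν i).v Q < (ν j).v Q := by
    by_contra! hle
    exact hns ⟨i, fun j hij => le_antisymm (hle j hij) (hmono i j hij Q)⟩
  have hfin : (ν i).v h ≠ ⊤ := by
    intro htop
    rw [← hi i le_rfl, (ν i).v_mul, htop, add_top] at ha
    exact ha rfl
  have := WithTop.add_lt_add_of_lt_of_le hfin hlt (hmono i j hij h)
  rw [← (ν i).v_mul, ← (ν j).v_mul, hi i le_rfl, hi j hij] at this
  exact this.false

namespace IsLimitVal

variable {γ : WithTop Γ} {μ : ValOn K[X] Γ}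

theorem eventually_eq_of_degree_lt (hμ : IsLimitVal ν Q γ μ) {g : K[X]}
    (hg : g.degree < Q.degree) : ∀ᶠ i in atTop, μ.v g = (ν i).v g := by
  simpa using hμ g 0 (fun _ => g) (by simp) (fun _ => hg)

variable [IsDirectedOrder I] [Nonempty I]

theorem v_add_mul (hμ : IsLimitVal ν Q γ μ) (hQ : Q.Monic) (hQpos : 0 < Q.degree) {c₀ : K[X]}
    (hc₀ : c₀.degree < Q.degree) (h : K[X]) :
    μ.v (c₀ + Q * h) = min (μ.v c₀) (γ + μ.v h) := by
  obtain ⟨r, d, hd, hdeg⟩ := exists_eq_sum_mul_pow_of_monic hQ hQpos h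
  have hsum := add_mul_sum_mul_pow_eq Q c₀ (r + 1) d
  rw [← hd] at hsum
  have hdeg' : ∀ j, (if j = 0 then c₀ else d (j - 1)).degree < Q.degree := by
    rintro (_ | j)
    · simpa using hc₀
    · simpa using hdeg j
  obtain ⟨i, hf, hh, hc⟩ := ((hμ _ _ _ hsum hdeg').and
    ((hμ _ _ _ hd hdeg).and (hμ.eventually_eq_of_degree_lt hc₀))).exists
  rw [hf, hh, hc, Finset.inf'_range_add_two,
    Finset.apply_inf'_eq_inf'_comp _ _ fun x y => (min_add_add_left γ x y).symm]
  simp only [↓reduceIte, Nat.add_one_ne_zero, add_tsub_cancel_right, zero_nsmul, add_zero,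
    Function.comp_def, succ_nsmul', add_left_comm]

theorem v_add_mul_le_of_forall_v_le (hμ : IsLimitVal ν Q γ μ)
    (hmono : ∀ i j, i ≤ j → ∀ f, (ν i).v f ≤ (ν j).v f) (hQ : Q.Monic) (hns : ¬ Stable ν Q)
    (hγ : ∀ i, (ν i).v Q < γ) {c₀ h : K[X]} (hc₀ : c₀.degree < Q.degree)
    (ih : ∀ i, (ν i).v h ≤ μ.v h) (i : I) : (ν i).v (c₀ + Q * h) ≤ μ.v (c₀ + Q * h) := by
  set f := c₀ + Q * h
  have hQh : Q * h = f - c₀ := by simp [f]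
  have hkey := hμ.v_add_mul hQ (degree_pos_of_not_stable hQ hns) hc₀ h
  by_contra! hlt
  have hfin : μ.v f ≠ ⊤ := hlt.ne_top
  have hf_lt : ∀ᶠ j in atTop, μ.v f < (ν j).v f :=
    (eventually_ge_atTop i).mono fun j hij => hlt.trans_le (hmono i j hij f)
  have hc₀_eq := hμ.eventually_eq_of_degree_lt hc₀
  rcases (hkey ▸ min_le_left _ _ : μ.v f ≤ μ.v c₀).eq_or_lt with heq | hlt₀
  · refine not_eventually_v_mul_eq (h := h) hmono hns hfin ?_
    filter_upwards [hf_lt, hc₀_eq] with j hj hj₀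
    rw [hQh, (ν j).v_sub_eq_right_of_lt (by rwa [← hj₀, ← heq]), ← hj₀, heq]
  · have hγh : μ.v f = γ + μ.v h := hkey.trans ((min_choice _ _).resolve_left (hkey ▸ hlt₀.ne))
    obtain ⟨j, hj, hj₀⟩ := (hf_lt.and hc₀_eq).exists
    have hhfin : (ν j).v h ≠ ⊤ :=
      ne_top_of_le_ne_top (WithTop.add_ne_top.1 (hγh ▸ hfin)).2 (ih j)
    have hupper : (ν j).v (Q * h) < μ.v f := by
      rw [(ν j).v_mul, hγh]
      exact WithTop.add_lt_add_of_lt_of_le hhfin (hγ j) (ih j)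
    have hlower : μ.v f < (ν j).v (Q * h) := by
      rw [hQh]
      exact (lt_min hj (hj₀ ▸ hlt₀)).trans_le ((ν j).min_le_v_sub f c₀)
    exact (hupper.trans hlower).false

theorem v_le (hμ : IsLimitVal ν Q γ μ)
    (hmono : ∀ i j, i ≤ j → ∀ f, (ν i).v f ≤ (ν j).v f) (hQ : Q.Monic) (hns : ¬ Stable ν Q)
    (hγ : ∀ i, (ν i).v Q < γ) (f : K[X]) (i : I) : (ν i).v f ≤ μ.v f := by
  induction f using degree_lt_wf.induction generalizing i with
  | _ f ih =>
  rcases eq_or_ne f 0 with rfl | hf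
  · simp [ValOn.v_zero]
  rw [← modByMonic_add_div f Q]
  exact hμ.v_add_mul_le_of_forall_v_le hmono hQ hns hγ (degree_modByMonic_lt f hQ)
    (ih _ (degree_divByMonic_lt f Q hf (degree_pos_of_not_stable hQ hns))) i

theorem le_v_of_forall_ge_eq (hμ : IsLimitVal ν Q γ μ)
    (hmono : ∀ i j, i ≤ j → ∀ f, (ν i).v f ≤ (ν j).v f) (hQ : Q.Monic) (hns : ¬ Stable ν Q)
    {f : K[X]} {i : I} (hs : ∀ j, i ≤ j → (ν i).v f = (ν j).v f) : μ.v f ≤ (ν i).v f := by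
  by_contra! hlt
  have hc₀ := degree_modByMonic_lt f hQ
  have hle : μ.v f ≤ μ.v (f %ₘ Q) := by
    have hkey := hμ.v_add_mul hQ (degree_pos_of_not_stable hQ hns) hc₀ (f /ₘ Q)
    rw [modByMonic_add_div f Q] at hkey
    exact hkey ▸ min_le_left _ _
  refine not_eventually_v_mul_eq (h := f /ₘ Q) hmono hns (ne_top_of_lt hlt) ?_
  filter_upwards [eventually_ge_atTop i, hμ.eventually_eq_of_degree_lt hc₀] with j hij hj
  rw [eq_sub_of_add_eq' (modByMonic_add_div f Q),
    (ν j).v_sub_eq_left_of_lt (by rw [← hs j hij, ← hj]; exact hlt.trans_le hle), hs j hij]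

end IsLimitVal

end LimitValuation

theorem value_eq_limit_iff_stable_at_general
    {K : Type*} [Field K] {Γ : Type*} [AddCommGroup Γ] [LinearOrder Γ] [IsOrderedAddMonoid Γ]
    {I : Type*} [LinearOrder I]
    (ν : I → ValOn (Polynomial K) Γ)
    (hmono : ∀ i j : I, i ≤ j → ∀ f : Polynomial K, (ν i).v f ≤ (ν j).v f)
    (Q : Polynomial K) (hQmonic : Q.Monic) (hQns : ¬ Stable ν Q)
    (γ : WithTop Γ) (hγ : ∀ i : I, (ν i).v Q < γ)
    (μ : ValOn (Polynomial K) Γ)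
    (hμ : ∀ (f : Polynomial K) (r : ℕ) (c : ℕ → Polynomial K),
      f = ∑ j ∈ Finset.range (r + 1), c j * Q ^ j →
      (∀ j : ℕ, (c j).degree < Q.degree) →
      ∃ i₀ : I, ∀ i : I, i₀ ≤ i →
        μ.v f = (Finset.range (r + 1)).inf' Finset.nonempty_range_add_one
          (fun j => (ν i).v (c j) + j • γ))
    (i : I) (f : Polynomial K) :
    ((ν i).v f = μ.v f ↔ ∀ j : I, i ≤ j → (ν i).v f = (ν j).v f) ∧
    ((ν i).v f = μ.v f → Stable ν f) := by
  have : Nonempty I := ⟨i⟩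
  have hlim : IsLimitVal ν Q γ μ := fun f r c hf hc => eventually_atTop.2 (hμ f r c hf hc)
  have hle := hlim.v_le hmono hQmonic hQns hγ f
  have hiff : (ν i).v f = μ.v f ↔ ∀ j, i ≤ j → (ν i).v f = (ν j).v f :=
    ⟨fun he j hij => le_antisymm (hmono i j hij f) (he ▸ hle j),
      fun hs => le_antisymm (hle i) (hlim.le_v_of_forall_ge_eq hmono hQmonic hQns hs)⟩
  exact ⟨hiff, fun he => ⟨i, fun j hij => (hiff.1 he j hij).symm⟩⟩

/-- `ν_i(f) = μ(f)` iff `ν_i(f) = ν_j(f)` for every `j ≥ i`;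
in particular, `ν_i(f) = μ(f)` implies `f` is `𝔳`-stable. -/
theorem value_eq_limit_iff_stable_at
    {K : Type*} [Field K] {Γ : Type*} [AddCommGroup Γ] [LinearOrder Γ] [IsOrderedAddMonoid Γ]
    {I : Type*} [LinearOrder I] [Nonempty I]
    (ν₀ : ValOn K Γ) (ν : I → ValOn (Polynomial K) Γ)
    (hext : ∀ (i : I) (a : K), (ν i).v (Polynomial.C a) = ν₀.v a)
    (hmono : ∀ i j : I, i ≤ j → ∀ f : Polynomial K, (ν i).v f ≤ (ν j).v f)
    (hstrict : ∀ i j : I, i < j → ∃ f : Polynomial K, (ν i).v f < (ν j).v f)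
    (hnomax : ∀ i : I, ∃ j : I, i < j)
    (Q : Polynomial K) (hQmonic : Q.Monic) (hQns : ¬ Stable ν Q)
    (hQmin : ∀ g : Polynomial K, ¬ Stable ν g → Q.degree ≤ g.degree)
    (γ : WithTop Γ) (hγ : ∀ i : I, (ν i).v Q < γ)
    (μ : ValOn (Polynomial K) Γ)
    (hμext : ∀ a : K, μ.v (Polynomial.C a) = ν₀.v a)
    (hμ : ∀ (f : Polynomial K) (r : ℕ) (c : ℕ → Polynomial K),
      f = ∑ j ∈ Finset.range (r + 1), c j * Q ^ j →
      (∀ j : ℕ, (c j).degree < Q.degree) →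
      ∃ i₀ : I, ∀ i : I, i₀ ≤ i →
        μ.v f = (Finset.range (r + 1)).inf' Finset.nonempty_range_add_one
          (fun j => (ν i).v (c j) + j • γ))
    (i : I) (f : Polynomial K) :
    ((ν i).v f = μ.v f ↔ ∀ j : I, i ≤ j → (ν i).v f = (ν j).v f) ∧
    ((ν i).v f = μ.v f → Stable ν f) :=
  value_eq_limit_iff_stable_at_general ν hmono Q hQmonic hQns γ hγ μ hμ i f
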